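/- (Soundness of the MILP encoding of STL.) Let φ be a negation-free STL formula built from predicates, finite conjunctions, finite disjunctions, bounded always □_{[a,b]}, and bounded eventually ◇_{[a,b]}. Fix L ∈ ℕ, an output sequence y_0, …, y_L ∈ ℝ^{n_y}, and constants M_t > 0, ε_t > 0 for each t ∈ {0,…,L}. Suppose an assignment gives each subformula ψ of φ and each t ∈ {0,…,L} a value ζ_t^ψ ∈ [0,1] satisfying all encoding constraints: for each predicate σ, ζ_t^σ ∈ {0,1} with h_σ(y_t) ≤ M_t ζ_t^σ − ε_t and −h_σ(y_t) ≤ M_t (1 − ζ_t^σ) − ε_t; for each conjunction ψ = ψ_1 ∧ … ∧ ψ_m, ζ_t^ψ ≤ ζ_t^{ψ_i} for all i and ζ_t^ψ ≥ 1 − m + Σ_i ζ_t^{ψ_i}; for each disjunction ψ = ψ_1 ∨ … ∨ ψ_m, ζ_t^ψ ≥ ζ_t^{ψ_i} for all i and ζ_t^ψ ≤ Σ_i ζ_t^{ψ_i}; for ψ = □_{[a,b]} ψ', ζ_t^ψ satisfies the conjunction constraints over the variables ζ_i^{ψ'} for i = min(t+a, L), …, min(t+b, L); for ψ = ◇_{[a,b]}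 ψ', ζ_t^ψ satisfies the disjunction constraints over the variables ζ_i^{ψ'} for i = min(t+a, L), …, min(t+b, L). Then for every t with t + ‖φ‖ ≤ L, if ζ_t^φ = 1 then (ŷ, t) ⊨ φ for every infinite sequence ŷ : ℕ → ℝ^{n_y} with ŷ_s = y_s for all 0 ≤ s ≤ L. In particular, if ‖φ‖ ≤ L and ζ_0^φ = 1, then every infinite extension of y_{[0,L]} satisfies φ at time 0. -/
import Mathlib


/-- Negation-free STL formulas over the output space `ℝ^{n_y}`: predicates `h(y) > 0`,
finite conjunctions, finite disjunctions, bounded always, and bounded eventually. -/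
inductive NFSTL (ny : ℕ) : Type where
  | pred : ((Fin ny → ℝ) → ℝ) → NFSTL ny
  | conj : List (NFSTL ny) → NFSTL ny
  | disj : List (NFSTL ny) → NFSTL ny
  | always : ℕ → ℕ → NFSTL ny → NFSTL ny
  | event : ℕ → ℕ → NFSTL ny → NFSTL ny

mutual
  /-- STL semantics: `NFSTL.sat y t φ` means `(y, t) ⊨ φ`. -/
  def NFSTL.sat {ny : ℕ} (y : ℕ → Fin ny → ℝ) : ℕ → NFSTL ny → Prop
    | t, .pred h => 0 < h (y t)
    | t, .conj l => NFSTL.satAll y t l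
    | t, .disj l => NFSTL.satAny y t l
    | t, .always a b φ => ∀ t', t + a ≤ t' → t' ≤ t + b → NFSTL.sat y t' φ
    | t, .event a b φ => ∃ t', t + a ≤ t' ∧ t' ≤ t + b ∧ NFSTL.sat y t' φ

  /-- All formulas in the list are satisfied (finite conjunction). -/
  def NFSTL.satAll {ny : ℕ} (y : ℕ → Fin ny → ℝ) : ℕ → List (NFSTL ny) → Prop
    | _, [] => True
    | t, φ :: l => NFSTL.sat y t φ ∧ NFSTL.satAll y t l

  /-- Some formula in the list is satisfied (finite disjunction). -/
  def NFSTL.satAny {ny : ℕ} (y : ℕ → Fin ny → ℝ) : ℕ → List (NFSTL ny) → Prop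
    | _, [] => False
    | t, φ :: l => NFSTL.sat y t φ ∨ NFSTL.satAny y t l
end

mutual
  /-- The formula length `‖φ‖`. -/
  def NFSTL.len {ny : ℕ} : NFSTL ny → ℕ
    | .pred _ => 0
    | .conj l => NFSTL.lenMax l
    | .disj l => NFSTL.lenMax l
    | .always _ b φ => φ.len + b
    | .event _ b φ => φ.len + b

  /-- Maximum of the lengths of the formulas in a list. -/
  def NFSTL.lenMax {ny : ℕ} : List (NFSTL ny) → ℕ
    | [] => 0
    | φ :: l => max φ.len (NFSTL.lenMax l)
end

/-- Well-formedness according to the grammar: in every temporal operator `a ≤ b`. -/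
inductive NFSTL.WF {ny : ℕ} : NFSTL ny → Prop
  | pred (h : (Fin ny → ℝ) → ℝ) : WF (pred h)
  | conj {l} : (∀ ψ ∈ l, WF ψ) → WF (conj l)
  | disj {l} : (∀ ψ ∈ l, WF ψ) → WF (disj l)
  | always {a b φ} : a ≤ b → WF φ → WF (always a b φ)
  | event {a b φ} : a ≤ b → WF φ → WF (event a b φ)

/-- `NFSTL.Subf ψ φ` : `ψ` is a subformula of `φ`. -/
inductive NFSTL.Subf {ny : ℕ} : NFSTL ny → NFSTL ny → Prop
  | refl (φ) : Subf φ φ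
  | conj {ψ φ l} : φ ∈ l → Subf ψ φ → Subf ψ (.conj l)
  | disj {ψ φ l} : φ ∈ l → Subf ψ φ → Subf ψ (.disj l)
  | always {ψ a b φ} : Subf ψ φ → Subf ψ (.always a b φ)
  | event {ψ a b φ} : Subf ψ φ → Subf ψ (.event a b φ)

/-- The MILP encoding constraints attached to a formula `ψ` at time `t`, for the
assignment `ζ`, horizon `L`, output data `y`, and big-M constants `M`, `ε`. -/
def EncOK {ny : ℕ} (L : ℕ) (y : ℕ → Fin ny → ℝ) (M ε : ℕ → ℝ)
    (ζ : NFSTL ny → ℕ → ℝ) : NFSTL ny → ℕ → Prop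
  | .pred h, t =>
      (ζ (.pred h) t = 0 ∨ ζ (.pred h) t = 1) ∧
      h (y t) ≤ M t * ζ (.pred h) t - ε t ∧
      -h (y t) ≤ M t * (1 - ζ (.pred h) t) - ε t
  | .conj l, t =>
      (∀ ψ ∈ l, ζ (.conj l) t ≤ ζ ψ t) ∧
      1 - (l.length : ℝ) + (l.map fun ψ => ζ ψ t).sum ≤ ζ (.conj l) t
  | .disj l, t =>
      (∀ ψ ∈ l, ζ ψ t ≤ ζ (.disj l) t) ∧
      ζ (.disj l) t ≤ (l.map fun ψ => ζ ψ t).sum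
  | .always a b ψ, t =>
      (∀ i ∈ Finset.Icc (min (t + a) L) (min (t + b) L), ζ (.always a b ψ) t ≤ ζ ψ i) ∧
      1 - ((Finset.Icc (min (t + a) L) (min (t + b) L)).card : ℝ)
          + ∑ i ∈ Finset.Icc (min (t + a) L) (min (t + b) L), ζ ψ i
        ≤ ζ (.always a b ψ) t
  | .event a b ψ, t =>
      (∀ i ∈ Finset.Icc (min (t + a) L) (min (t + b) L), ζ ψ i ≤ ζ (.event a b ψ) t) ∧
      ζ (.event a b ψ) t ≤ ∑ i ∈ Finset.Icc (min (t + a) L) (min (t + b) L), ζ ψ i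

theorem NFSTL.myInd {ny : ℕ} {motive : NFSTL ny → Prop}
    (hpred : ∀ h, motive (.pred h))
    (hconj : ∀ l, (∀ ψ ∈ l, motive ψ) → motive (.conj l))
    (hdisj : ∀ l, (∀ ψ ∈ l, motive ψ) → motive (.disj l))
    (halways : ∀ a b ψ, motive ψ → motive (.always a b ψ))
    (hevent : ∀ a b ψ, motive ψ → motive (.event a b ψ)) : ∀ φ, motive φ
  | .pred h => hpred h
  | .conj l => hconj l (fun ψ _hm =>
      NFSTL.myInd hpred hconj hdisj halways hevent ψ)
  | .disj l => hdisj l (fun ψ _hm =>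
      NFSTL.myInd hpred hconj hdisj halways hevent ψ)
  | .always a b ψ => halways a b ψ (NFSTL.myInd hpred hconj hdisj halways hevent ψ)
  | .event a b ψ => hevent a b ψ (NFSTL.myInd hpred hconj hdisj halways hevent ψ)
termination_by φ => sizeOf φ
decreasing_by
  all_goals simp_wf
  all_goals first
    | (have := List.sizeOf_lt_of_mem _hm; omega)
    | omega

theorem NFSTL.len_le_lenMax {ny : ℕ} {ψ : NFSTL ny} :
    ∀ {l : List (NFSTL ny)}, ψ ∈ l → ψ.len ≤ NFSTL.lenMax l := by
  intro l hm
  induction l with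
  | nil => simp at hm
  | cons a l ih =>
    rcases List.mem_cons.mp hm with h | h
    · simp [NFSTL.lenMax, ← h]
    · exact le_trans (ih h) (by simp [NFSTL.lenMax])

theorem NFSTL.satAll_of {ny : ℕ} (y : ℕ → Fin ny → ℝ) (t : ℕ) :
    ∀ {l : List (NFSTL ny)}, (∀ ψ ∈ l, NFSTL.sat y t ψ) → NFSTL.satAll y t l := by
  intro l h
  induction l with
  | nil => trivial
  | cons a l ih =>
    exact ⟨h a (by simp), ih fun ψ hm => h ψ (by simp [hm])⟩

theorem NFSTL.satAny_of {ny : ℕ} (y : ℕ → Fin ny → ℝ) (t : ℕ) :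
    ∀ {l : List (NFSTL ny)} {ψ}, ψ ∈ l → NFSTL.sat y t ψ → NFSTL.satAny y t l := by
  intro l ψ hm hs
  induction l with
  | nil => simp at hm
  | cons a l ih =>
    rcases List.mem_cons.mp hm with h | h
    · exact Or.inl (h ▸ hs)
    · exact Or.inr (ih h)

theorem list_map_sum_nonpos {α : Type*} (f : α → ℝ) :
    ∀ l : List α, (∀ x ∈ l, f x ≤ 0) → (l.map f).sum ≤ 0 := by
  intro l h
  induction l with
  | nil => simp
  | cons a l ih =>
    have h1 := h a (by simp)
    have h2 := ih (fun x hx => h x (by simp [hx]))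
    simpa using by linarith

theorem milp_aux {ny : ℕ} (L : ℕ) (y : ℕ → Fin ny → ℝ) (M ε : ℕ → ℝ)
    (hM : ∀ t ≤ L, 0 < M t) (hε : ∀ t ≤ L, 0 < ε t)
    (ζ : NFSTL ny → ℕ → ℝ) :
    ∀ φ : NFSTL ny, NFSTL.WF φ →
      (∀ ψ : NFSTL ny, NFSTL.Subf ψ φ → ∀ t ≤ L, 0 ≤ ζ ψ t ∧ ζ ψ t ≤ 1) →
      (∀ ψ : NFSTL ny, NFSTL.Subf ψ φ → ∀ t ≤ L, EncOK L y M ε ζ ψ t) →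
      ∀ t, t + φ.len ≤ L → 0 < ζ φ t →
        ∀ yhat : ℕ → Fin ny → ℝ, (∀ s ≤ L, yhat s = y s) → NFSTL.sat yhat t φ := by
  intro φ
  induction φ using NFSTL.myInd with
  | hpred h =>
    intro _ _ hcons t ht hζ yhat hagree
    have htL : t ≤ L := by
      have : NFSTL.len (ny := ny) (.pred h) = 0 := rfl
      omega
    obtain ⟨hbin, _, h2⟩ := hcons _ (NFSTL.Subf.refl _) t htL
    have hζ1 : ζ (.pred h) t = 1 := by rcases hbin with h0 | h1 <;> [linarith; exact h1]
    rw [hζ1] at h2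
    have : 0 < h (y t) := by
      have := hε t htL; nlinarith
    show 0 < h (yhat t)
    rw [hagree t htL]; exact this
  | hconj l ih =>
    intro hwf hrange hcons t ht hζ yhat hagree
    have htL : t ≤ L := by
      have : NFSTL.len (ny := ny) (.conj l) = NFSTL.lenMax l := rfl
      omega
    obtain ⟨h1, _⟩ := hcons _ (NFSTL.Subf.refl _) t htL
    apply NFSTL.satAll_of
    intro ψ hm
    cases hwf with
    | conj hwf' =>
      exact ih ψ hm (hwf' ψ hm)
        (fun ψ' hs => hrange ψ' (NFSTL.Subf.conj hm hs))
        (fun ψ' hs => hcons ψ' (NFSTL.Subf.conj hm hs))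
        t (by have := NFSTL.len_le_lenMax hm;
              have : NFSTL.len (ny := ny) (.conj l) = NFSTL.lenMax l := rfl; omega)
        (lt_of_lt_of_le hζ (h1 ψ hm)) yhat hagree
  | hdisj l ih =>
    intro hwf hrange hcons t ht hζ yhat hagree
    have htL : t ≤ L := by
      have : NFSTL.len (ny := ny) (.disj l) = NFSTL.lenMax l := rfl
      omega
    obtain ⟨_, h2⟩ := hcons _ (NFSTL.Subf.refl _) t htL
    have hpos : 0 < (l.map fun ψ => ζ ψ t).sum := lt_of_lt_of_le hζ h2
    have : ∃ ψ ∈ l, 0 < ζ ψ t := by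
      by_contra hc
      push_neg at hc
      have : (l.map fun ψ => ζ ψ t).sum ≤ 0 :=
        list_map_sum_nonpos (fun ψ => ζ ψ t) l hc
      linarith
    obtain ⟨ψ, hm, hψpos⟩ := this
    cases hwf with
    | disj hwf' =>
      exact NFSTL.satAny_of yhat t hm
        (ih ψ hm (hwf' ψ hm)
          (fun ψ' hs => hrange ψ' (NFSTL.Subf.disj hm hs))
          (fun ψ' hs => hcons ψ' (NFSTL.Subf.disj hm hs))
          t (by have := NFSTL.len_le_lenMax hm;
                have : NFSTL.len (ny := ny) (.disj l) = NFSTL.lenMax l := rfl; omega)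
          hψpos yhat hagree)
  | halways a b ψ ih =>
    intro hwf hrange hcons t ht hζ yhat hagree
    have hlen : NFSTL.len (ny := ny) (.always a b ψ) = ψ.len + b := rfl
    cases hwf with
    | always hab hwfψ =>
      have hbL : t + b ≤ L := by omega
      have haL : t + a ≤ L := by omega
      have hmina : min (t + a) L = t + a := by omega
      have hminb : min (t + b) L = t + b := by omega
      obtain ⟨h1, _⟩ := hcons _ (NFSTL.Subf.refl _) t (by omega)
      rw [hmina, hminb] at h1
      intro t' hta htb
      exact ih hwfψ
        (fun ψ' hs => hrange ψ' (NFSTL.Subf.always hs))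
        (fun ψ' hs => hcons ψ' (NFSTL.Subf.always hs))
        t' (by omega)
        (lt_of_lt_of_le hζ (h1 t' (Finset.mem_Icc.mpr ⟨hta, htb⟩)))
        yhat hagree
  | hevent a b ψ ih =>
    intro hwf hrange hcons t ht hζ yhat hagree
    have hlen : NFSTL.len (ny := ny) (.event a b ψ) = ψ.len + b := rfl
    cases hwf with
    | event hab hwfψ =>
      have hbL : t + b ≤ L := by omega
      have hmina : min (t + a) L = t + a := by omega
      have hminb : min (t + b) L = t + b := by omega
      obtain ⟨_, h2⟩ := hcons _ (NFSTL.Subf.refl _) t (by omega)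
      rw [hmina, hminb] at h2
      have hpos : 0 < ∑ i ∈ Finset.Icc (t + a) (t + b), ζ ψ i := lt_of_lt_of_le hζ h2
      have : ∃ i ∈ Finset.Icc (t + a) (t + b), 0 < ζ ψ i := by
        by_contra hc
        push_neg at hc
        have : ∑ i ∈ Finset.Icc (t + a) (t + b), ζ ψ i ≤ 0 :=
          Finset.sum_nonpos hc
        linarith
      obtain ⟨i, hi, hipos⟩ := this
      rw [Finset.mem_Icc] at hi
      exact ⟨i, hi.1, hi.2,
        ih hwfψ
          (fun ψ' hs => hrange ψ' (NFSTL.Subf.event hs))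
          (fun ψ' hs => hcons ψ' (NFSTL.Subf.event hs))
          i (by omega) hipos yhat hagree⟩

/-- Soundness of the MILP encoding of STL: if an assignment `ζ` of values in `[0,1]` to
all subformulas of `φ` and all times `t ≤ L` satisfies all encoding constraints, then for
every `t` with `t + ‖φ‖ ≤ L`, `ζ_t^φ = 1` implies that every infinite sequence agreeing
with `y` on `{0,…,L}` satisfies `φ` at time `t`. -/
theorem milp_encoding_sound {ny : ℕ} (φ : NFSTL ny) (hwf : NFSTL.WF φ) (L : ℕ)
    (y : ℕ → Fin ny → ℝ) (M ε : ℕ → ℝ)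
    (hM : ∀ t ≤ L, 0 < M t) (hε : ∀ t ≤ L, 0 < ε t)
    (ζ : NFSTL ny → ℕ → ℝ)
    (hrange : ∀ ψ : NFSTL ny, NFSTL.Subf ψ φ → ∀ t ≤ L, 0 ≤ ζ ψ t ∧ ζ ψ t ≤ 1)
    (hcons : ∀ ψ : NFSTL ny, NFSTL.Subf ψ φ → ∀ t ≤ L, EncOK L y M ε ζ ψ t) :
    ∀ t, t + φ.len ≤ L → ζ φ t = 1 →
      ∀ yhat : ℕ → Fin ny → ℝ, (∀ s ≤ L, yhat s = y s) → NFSTL.sat yhat t φ := by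
  intro t ht hζ1 yhat hagree
  exact milp_aux L y M ε hM hε ζ φ hwf hrange hcons t ht (by rw [hζ1]; norm_num) yhat hagree
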